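/- Conversely, the choice γ_t = μ_t σ_{t-Δt}²/(μ_{t-Δt} σ_t) in the DDIM family yields a forward conditional p(x_t | x_{t-Δt}, x_0) = N((μ_t/μ_{t-Δt}) x_{t-Δt}, (σ_t² - (μ_t²/μ_{t-Δt}²) σ_{t-Δt}²) I), which does not depend on x_0. -/

import Mathlib

open Real

/-- One-dimensional Gaussian probability density with mean `m` and variance `v`. -/
noncomputable def gpdf (m v x : ℝ) : ℝ :=
  (Real.sqrt (2 * π * v))⁻¹ * Real.exp (-(x - m) ^ 2 / (2 * v))

/-!
With `γ = μ_t σ_{t-Δt}² / (μ_{t-Δt} σ_t)` both reverse-step and forward-step variances are multiples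
of `D = μ_{t-Δt}² σ_t² - μ_t² σ_{t-Δt}²`, so the two sides of the Bayes identity have the same
normalising constants; the Gaussian exponents agree because both sides are the same quadratic form
in `(x_0, x_{t-Δt}, x_t)`, which is an identity of rational functions once `γ` is substituted.
-/

theorem gpdf_mul_gpdf {m₁ v₁ m₂ v₂ : ℝ} (hv₁ : 0 ≤ v₁) (x y : ℝ) :
    gpdf m₁ v₁ x * gpdf m₂ v₂ y
      = (√(2 * π * v₁ * (2 * π * v₂)))⁻¹
        * exp (-(x - m₁) ^ 2 / (2 * v₁) + -(y - m₂) ^ 2 / (2 * v₂)) := by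
  rw [gpdf, gpdf, mul_mul_mul_comm, ← mul_inv, ← sqrt_mul (by positivity), ← exp_add]

theorem gpdf_mul_gpdf_eq_gpdf_mul_gpdf {m₁ v₁ m₂ v₂ m₃ v₃ m₄ v₄ x y : ℝ}
    (hv₁ : 0 ≤ v₁) (hv₃ : 0 ≤ v₃) (hv : v₁ * v₂ = v₃ * v₄)
    (he : (x - m₁) ^ 2 / (2 * v₁) + (y - m₂) ^ 2 / (2 * v₂)
        = (y - m₃) ^ 2 / (2 * v₃) + (x - m₄) ^ 2 / (2 * v₄)) :
    gpdf m₁ v₁ x * gpdf m₂ v₂ y = gpdf m₃ v₃ y * gpdf m₄ v₄ x := by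
  have hnorm : 2 * π * v₁ * (2 * π * v₂) = 2 * π * v₃ * (2 * π * v₄) := by
    linear_combination 4 * π ^ 2 * hv
  have hexp : -(x - m₁) ^ 2 / (2 * v₁) + -(y - m₂) ^ 2 / (2 * v₂)
      = -(y - m₃) ^ 2 / (2 * v₃) + -(x - m₄) ^ 2 / (2 * v₄) := by
    linear_combination -he
  rw [gpdf_mul_gpdf hv₁, gpdf_mul_gpdf hv₃, hnorm, hexp]

section DDPMGamma

variable {μs μt σs σt : ℝ}

theorem ddpm_reverse_variance_eq (hμs : μs ≠ 0) (hσt : σt ≠ 0) :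
    σs ^ 2 - (μt * σs ^ 2 / (μs * σt)) ^ 2
      = σs ^ 2 * (μs ^ 2 * σt ^ 2 - μt ^ 2 * σs ^ 2) / (μs ^ 2 * σt ^ 2) := by
  field_simp

theorem ddpm_forward_variance_eq (hμs : μs ≠ 0) :
    σt ^ 2 - μt ^ 2 / μs ^ 2 * σs ^ 2 = (μs ^ 2 * σt ^ 2 - μt ^ 2 * σs ^ 2) / μs ^ 2 := by
  field_simp

theorem ddpm_gaussian_exponent_eq (hμs : μs ≠ 0) (hσs : σs ≠ 0) (hσt : σt ≠ 0)
    (hD : μs ^ 2 * σt ^ 2 - μt ^ 2 * σs ^ 2 ≠ 0) (x0 xs xt : ℝ) :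
    (xs - (μs * x0 + μt * σs ^ 2 / (μs * σt) * (xt - μt * x0) / σt)) ^ 2
          / (2 * (σs ^ 2 - (μt * σs ^ 2 / (μs * σt)) ^ 2))
        + (xt - μt * x0) ^ 2 / (2 * σt ^ 2)
      = (xt - μt / μs * xs) ^ 2 / (2 * (σt ^ 2 - μt ^ 2 / μs ^ 2 * σs ^ 2))
        + (xs - μs * x0) ^ 2 / (2 * σs ^ 2) := by
  rw [ddpm_reverse_variance_eq hμs hσt, ddpm_forward_variance_eq hμs]
  field_simp
  ring

end DDPMGamma

/-- Independence of `x_0` is expressed by the Bayes factorization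
`p(x_{t-Δt}|x_t,x_0) p(x_t|x_0) = p(x_t|x_{t-Δt}) p(x_{t-Δt}|x_0)`,
where `μs, σs` stand for `μ_{t-Δt}, σ_{t-Δt}`. -/
theorem ddpm_gamma_gives_markov_forward_general
    (μs μt σs σt : ℝ)
    (hμs : 0 < μs) (hσs : 0 < σs) (hσt : 0 < σt)
    (hsnr : μt ^ 2 * σs ^ 2 < σt ^ 2 * μs ^ 2)
    (γ : ℝ) (hγ : γ = μt * σs ^ 2 / (μs * σt)) :
    ∀ x0 xs xt : ℝ,
      gpdf (μs * x0 + γ * (xt - μt * x0) / σt) (σs ^ 2 - γ ^ 2) xs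
          * gpdf (μt * x0) (σt ^ 2) xt
        = gpdf (μt / μs * xs) (σt ^ 2 - μt ^ 2 / μs ^ 2 * σs ^ 2) xt
          * gpdf (μs * x0) (σs ^ 2) xs := by
  intro x0 xs xt
  subst hγ
  have hD : 0 < μs ^ 2 * σt ^ 2 - μt ^ 2 * σs ^ 2 := by linarith
  refine gpdf_mul_gpdf_eq_gpdf_mul_gpdf ?_ ?_ ?_
    (ddpm_gaussian_exponent_eq hμs.ne' hσs.ne' hσt.ne' hD.ne' x0 xs xt)
  · rw [ddpm_reverse_variance_eq hμs.ne' hσt.ne']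
    positivity
  · rw [ddpm_forward_variance_eq hμs.ne']
    positivity
  · rw [ddpm_reverse_variance_eq hμs.ne' hσt.ne', ddpm_forward_variance_eq hμs.ne']
    field_simp

/-- Conversely, the choice `γ = μ_t σ_{t-Δt}²/(μ_{t-Δt} σ_t)` in the DDIM family
(`λ² = σ_{t-Δt}² - γ²`) yields a forward conditional
`p(x_t | x_{t-Δt}, x_0) = N((μ_t/μ_{t-Δt}) x_{t-Δt}, σ_t² - (μ_t²/μ_{t-Δt}²) σ_{t-Δt}²)`
that does not depend on `x_0`; this is expressed by the Bayes factorization identity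
`p(x_{t-Δt}|x_t,x_0) p(x_t|x_0) = p(x_t|x_{t-Δt}) p(x_{t-Δt}|x_0)`.
Here `μs, σs` denote `μ_{t-Δt}, σ_{t-Δt}`, and `σ_t² μ_{t-Δt}² > μ_t² σ_{t-Δt}²`. -/
theorem ddpm_gamma_gives_markov_forward
    (μs μt σs σt : ℝ)
    (hμs : 0 < μs) (hμt : 0 < μt) (hσs : 0 < σs) (hσt : 0 < σt)
    (hsnr : μt ^ 2 * σs ^ 2 < σt ^ 2 * μs ^ 2)
    (γ : ℝ) (hγ : γ = μt * σs ^ 2 / (μs * σt)) :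
    ∀ x0 xs xt : ℝ,
      gpdf (μs * x0 + γ * (xt - μt * x0) / σt) (σs ^ 2 - γ ^ 2) xs
          * gpdf (μt * x0) (σt ^ 2) xt
        = gpdf (μt / μs * xs) (σt ^ 2 - μt ^ 2 / μs ^ 2 * σs ^ 2) xt
          * gpdf (μs * x0) (σs ^ 2) xs :=
  ddpm_gamma_gives_markov_forward_general μs μt σs σt hμs hσs hσt hsnr γ hγ
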